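/- Let α : M → O be a prelog structure, i.e., a homomorphism of commutative monoids where O is the multiplicative monoid of a commutative ring, and let O^× denote the units of O. Define M^a = (M ⊕ O^×)/∼, the quotient of M × O^× by the congruence generated by (p, α(p)^{-1}) ∼ (1,1) for p ∈ α^{-1}(O^×), and define α^a(p,h) = h·α(p). Then α^a restricts to an isomorphism (α^a)^{-1}(O^×) → O^×; in particular (M^a, α^a) is a log structure. -/

import Mathlib

/-!
Every element `[(p, h)]` of `M^a` whose image `h · α(p)` is a unit has `α(p)` a unit, so the
generating relation moves it to `[(1, h · α(p))]`.  Hence the preimage of `O^×` is exactly the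
image of `u ↦ [(1, u)]`, which is a section of `α^a` over `O^×`.
-/

/-- The congruence on `M × Oˣ` generated by identifying `(p, α(p)⁻¹)` with `(1, 1)`
for all `p` with `α p` a unit; the quotient is the associated log structure `M^a` of
the prelog structure `α : M →* O`. -/
def assocLogCon {M O : Type*} [CommMonoid M] [CommRing O] (α : M →* O) : Con (M × Oˣ) :=
  conGen (fun x y : M × Oˣ =>
    y = 1 ∧ ∃ (p : M) (h : IsUnit (α p)), x = (p, h.unit⁻¹))

namespace assocLogCon

variable {M O : Type*} [CommMonoid M] [CommRing O] (α : M →* O)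

theorem le_ker_coprod : assocLogCon α ≤ Con.ker (α.coprod (Units.coeHom O)) := by
  refine Con.conGen_le.mpr ?_
  rintro x y ⟨rfl, p, hp, rfl⟩
  simp [Con.ker_rel]

/-- The structure map `α^a : M^a → O`. -/
def hom : (assocLogCon α).Quotient →* O :=
  (assocLogCon α).lift (α.coprod (Units.coeHom O)) (le_ker_coprod α)

theorem hom_mk (p : M) (h : Oˣ) : hom α (Con.mk' (assocLogCon α) (p, h)) = (h : O) * α p :=
  mul_comm _ _

def unitsHom : Oˣ →* (assocLogCon α).Quotient :=
  (Con.mk' (assocLogCon α)).comp (MonoidHom.inr M Oˣ)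

theorem hom_unitsHom (u : Oˣ) : hom α (unitsHom α u) = u :=
  (hom_mk α 1 u).trans (by simp)

theorem mk_eq_unitsHom (p : M) (h : Oˣ) (hp : IsUnit (α p)) :
    Con.mk' (assocLogCon α) (p, h) = unitsHom α (h * hp.unit) := by
  have hgen : assocLogCon α (p, hp.unit⁻¹) 1 := ConGen.Rel.of _ _ ⟨rfl, p, hp, rfl⟩
  have := (assocLogCon α).mul hgen ((assocLogCon α).refl (1, h * hp.unit))
  refine (Con.eq _).mpr ?_
  simpa [mul_comm, mul_left_comm] using this

theorem eq_unitsHom_of_hom_eq {x : (assocLogCon α).Quotient} {u : Oˣ} (hx : hom α x = u) :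
    x = unitsHom α u := by
  induction x using Con.induction_on with
  | H y =>
    obtain ⟨p, h⟩ := y
    rw [← Con.coe_mk', hom_mk] at hx
    have hp : IsUnit (α p) := isUnit_of_mul_isUnit_right (hx ▸ u.isUnit)
    rw [← Con.coe_mk', mk_eq_unitsHom α p h hp]
    congr 1
    ext
    simpa using hx

end assocLogCon

open assocLogCon in
/-- Let `α : M → O` be a prelog structure (a monoid homomorphism to the multiplicative
monoid of a commutative ring `O`).  On the quotient `M^a = (M ⊕ O^×)/∼` there is a
(well-defined) structure map `α^a` with `α^a(p, h) = h · α(p)`, and `α^a` restricts to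
a bijection from `(α^a)⁻¹(O^×)` onto `O^×`; in particular `(M^a, α^a)` is a log
structure. -/
theorem associated_prelog_is_log {M O : Type*} [CommMonoid M] [CommRing O] (α : M →* O) :
    ∃ αa : (assocLogCon α).Quotient →* O,
      (∀ (p : M) (h : Oˣ), αa (Con.mk' (assocLogCon α) (p, h)) = (h : O) * α p) ∧
      Set.BijOn αa (αa ⁻¹' {x : O | IsUnit x}) {x : O | IsUnit x} := by
  refine ⟨hom α, hom_mk α, fun _ hx => hx, ?_, ?_⟩
  · rintro x ⟨u, hu⟩ y - hxy
    rw [eq_unitsHom_of_hom_eq α hu.symm, eq_unitsHom_of_hom_eq α (hxy.symm.trans hu.symm)]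
  · intro u hu
    exact ⟨unitsHom α hu.unit, by simpa [hom_unitsHom] using hu, by simp [hom_unitsHom]⟩
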